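/- Let φ ∈ L²(ℝ) be a scale-2 father function: the translates {φ(·−k) : k ∈ ℤ} are orthonormal; with V_0 the closed linear span of these translates and (Uξ)(x) = 2^{−1/2} ξ(x/2) the scaling unitary on L²(ℝ), one has Uφ ∈ V_0, ⋂_{n∈ℤ} U^n V_0 = {0}, and ⋃_{n∈ℤ} U^n V_0 is dense in L²(ℝ). Let m_0 ∈ L²(𝕋) be the low-pass filter determined by √2 φ̂(2t) = m_0(e^{−it}) φ̂(t) (a.e. t ∈ ℝ), where φ̂ is the Fourier transform φ̂(t) = (2π)^{−1/2} ∫ e^{−ixt} φ(x) dx, and let S_0 on L²(𝕋) be (S_0 ξ)(z) = m_0(z) ξ(z²). Let M_φ̂ : L²(𝕋) → L²(ℝ) be the isometry (M_φ̂ ξ)(t) = φ̂(t) ξ(e^{−it}), and let F denote the Plancherel Fourier transform, a unitary of L²(ℝ). Then S_0 is a compression of the scaling operator U in the sense that S_0 = M_φ̂* F U F^{−1} M_φ̂. -/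

import Mathlib

open MeasureTheory Real

noncomputable section

instance : Fact (0 < 2 * Real.pi) := ⟨by positivity⟩

/-- The circle `𝕋 = ℝ/2πℤ`, written additively; the point `(t : 𝕋)` corresponds to `e^{-it}`
and `2 • z` corresponds to `z ↦ z²`. -/
abbrev Circle2π : Type := AddCircle (2 * Real.pi)

/-- Normalized Haar (probability) measure on the circle. -/
abbrev haarT : Measure Circle2π := AddCircle.haarAddCircle

/-- `L²(𝕋)`. -/
abbrev HT : Type := Lp ℂ 2 haarT

/-- `L²(ℝ)`. -/
abbrev L2R : Type := Lp ℂ 2 (volume : Measure ℝ)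

/-- The closed linear span `V₀` of the translates `φ(· - k)`. -/
def spanTranslates (φL : ℤ → L2R) : Submodule ℂ L2R :=
  (Submodule.span ℂ (Set.range φL)).topologicalClosure

/-- The subspace `Vₙ = Uⁿ V₀`. -/
def dilSubspace (U : L2R ≃ₗᵢ[ℂ] L2R) (V : Submodule ℂ L2R) (n : ℤ) : Submodule ℂ L2R :=
  V.map ((U ^ n).toLinearEquiv : L2R →ₗ[ℂ] L2R)

/-!
Conjugation by the Fourier transform turns translation by `n` into multiplication by `e^{-int}`
and turns `U` into `U⁻¹ g = √2 g(2·)`; both identities are checked on `L¹ ∩ L²` and extended by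
density. Hence `M_φ̂` sends the Fourier basis `e^{int}` of `L²(𝕋)` to the orthonormal family
`F φ(· + n)`, so `M_φ̂* M_φ̂ = 1`. The refinement equation `√2 φ̂(2t) = m₀(e^{-it}) φ̂(t)` says
precisely that `F U F⁻¹ M_φ̂ = M_φ̂ S₀`, and applying `M_φ̂*` gives the claim.
-/

open scoped ENNReal
open Complex (I exp)

lemma quasiMeasurePreserving_const_mul {c : ℝ} (hc : c ≠ 0) :
    Measure.QuasiMeasurePreserving (fun t : ℝ => c * t) volume volume :=
  Measure.quasiMeasurePreserving_smul volume hc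

lemma AddCircle.quasiMeasurePreserving_coe (T : ℝ) [hT : Fact (0 < T)] :
    Measure.QuasiMeasurePreserving ((↑) : ℝ → AddCircle T) volume AddCircle.haarAddCircle := by
  refine ⟨AddCircle.measurable_mk', ?_⟩
  have h := (isAddFundamentalDomain_Ioc' hT.out 0).absolutelyContinuous_map
  rw [(AddCircle.measurePreserving_mk T 0).map_eq] at h
  exact h.trans (by
    rw [AddCircle.volume_eq_smul_haarAddCircle]; exact Measure.smul_absolutelyContinuous)

lemma AddCircle.fourierBasis_comp_coe_ae_eq (T : ℝ) [Fact (0 < T)] (n : ℤ) :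
    (fun t : ℝ => fourierBasis (T := T) n (t : AddCircle T)) =ᵐ[volume]
      fun t => exp (2 * π * I * n * t / T) := by
  filter_upwards [(quasiMeasurePreserving_coe T).ae_eq (coeFn_fourierLp 2 n)] with t ht
  simp only [Function.comp_apply] at ht
  rw [coe_fourierBasis, ht, fourier_coe_apply]

lemma MeasureTheory.Lp.dense_setOf_integrable {α E : Type*} [MeasurableSpace α] {μ : Measure α}
    [NormedAddCommGroup E] {p : ℝ≥0∞} [Fact (1 ≤ p)] (hp : p ≠ ∞) :
    Dense {f : Lp E p μ | Integrable f μ} := by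
  refine (Lp.simpleFunc.dense hp).mono fun f hf => ?_
  have hp0 : p ≠ 0 := (zero_lt_one.trans_le Fact.out).ne'
  exact ((SimpleFunc.memLp_iff_integrable hp0 hp).mp
    (Lp.simpleFunc.memLp ⟨f, hf⟩)).congr (Lp.simpleFunc.toSimpleFunc_eq_toFun ⟨f, hf⟩)

lemma HilbertBasis.adjoint_comp_self_eq_one {ι 𝕜 E F : Type*} [RCLike 𝕜]
    [NormedAddCommGroup E] [InnerProductSpace 𝕜 E] [CompleteSpace E]
    [NormedAddCommGroup F] [InnerProductSpace 𝕜 F] [CompleteSpace F]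
    (b : HilbertBasis ι 𝕜 E) {T : E →L[𝕜] F} (hT : Orthonormal 𝕜 (T ∘ b)) :
    ContinuousLinearMap.adjoint T ∘L T = 1 := by
  classical
  refine ContinuousLinearMap.ext_on
    (Submodule.dense_iff_topologicalClosure_eq_top.mpr b.dense_span) ?_
  rintro - ⟨i, rfl⟩
  refine b.repr.injective (lp.ext (funext fun j => ?_))
  simp only [HilbertBasis.repr_apply_apply, ContinuousLinearMap.comp_apply,
    ContinuousLinearMap.adjoint_inner_right, one_apply_eq_self]
  rw [orthonormal_iff_ite.mp b.orthonormal, ← orthonormal_iff_ite.mp hT j i]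
  rfl

lemma integral_exp_mul_comp_div (f : ℝ → ℂ) {a : ℝ} (ha : a ≠ 0) (t : ℝ) :
    ∫ x : ℝ, exp (-(I * x * t)) * f (x / a) =
      |a| * ∫ x : ℝ, exp (-(I * x * (a * t : ℝ))) * f x := by
  calc ∫ x : ℝ, exp (-(I * x * t)) * f (x / a)
      = ∫ x : ℝ, (fun y : ℝ => exp (-(I * y * (a * t : ℝ))) * f y) (x / a) := by
        have ha' : (a : ℂ) ≠ 0 := by exact_mod_cast ha
        congr 1 with x
        congr 2
        push_cast
        field_simp
    _ = _ := by
        rw [Measure.integral_comp_div (fun y : ℝ => exp (-(I * y * (a * t : ℝ))) * f y),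
          Complex.real_smul]

lemma integral_exp_mul_comp_sub (f : ℝ → ℂ) (a t : ℝ) :
    ∫ x : ℝ, exp (-(I * x * t)) * f (x - a) =
      exp (-(I * a * t)) * ∫ x : ℝ, exp (-(I * x * t)) * f x := by
  calc ∫ x : ℝ, exp (-(I * x * t)) * f (x - a)
      = ∫ x : ℝ, (fun y : ℝ => exp (-(I * (y + a : ℝ) * t)) * f y) (x - a) := by simp
    _ = ∫ y : ℝ, exp (-(I * (y + a : ℝ) * t)) * f y :=
        integral_sub_right_eq_self (fun y : ℝ => exp (-(I * (y + a : ℝ) * t)) * f y) a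
    _ = _ := by
        rw [← integral_const_mul]
        congr 1 with y
        rw [← mul_assoc, ← Complex.exp_add]
        push_cast
        ring_nf

def IsPlancherelTransform (F : L2R ≃ₗᵢ[ℂ] L2R) : Prop :=
  ∀ f : L2R, Integrable ⇑f volume →
    ⇑(F f) =ᵐ[volume] fun t : ℝ => ((√(2 * π) : ℝ) : ℂ)⁻¹ * ∫ x : ℝ, exp (-(I * x * t)) * f x

def IsDilation (c : ℝ) (U : L2R ≃ₗᵢ[ℂ] L2R) : Prop :=
  ∀ ξ : L2R, ⇑(U ξ) =ᵐ[volume] fun x => ((√c : ℝ) : ℂ)⁻¹ * ξ (x / c)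

def translation (a : ℝ) : L2R →ₗᵢ[ℂ] L2R :=
  Lp.compMeasurePreservingₗᵢ ℂ (· - a) (measurePreserving_sub_right volume a)

lemma coeFn_translation (a : ℝ) (f : L2R) :
    ⇑(translation a f) =ᵐ[volume] fun x => f (x - a) :=
  Lp.coeFn_compMeasurePreserving f _

lemma memLp_top_exp_neg_I_mul (a : ℝ) :
    MemLp (fun t : ℝ => exp (-(I * a * t))) ∞ volume :=
  memLp_top_of_bound (by fun_prop : Continuous fun t : ℝ => exp (-(I * a * t))).aestronglyMeasurable
    1 (ae_of_all _ fun t => by simp [Complex.norm_exp])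

def modulation (a : ℝ) : L2R →L[ℂ] L2R :=
  (ContinuousLinearMap.mul ℂ ℂ).holderL volume ∞ 2 2 ((memLp_top_exp_neg_I_mul a).toLp _)

lemma coeFn_modulation (a : ℝ) (f : L2R) :
    ⇑(modulation a f) =ᵐ[volume] fun t => exp (-(I * a * t)) * f t := by
  filter_upwards [(ContinuousLinearMap.mul ℂ ℂ).coeFn_holder (r := 2)
      ((memLp_top_exp_neg_I_mul a).toLp _) f,
    (memLp_top_exp_neg_I_mul a).coeFn_toLp] with t h1 h2
  simp [modulation, h1, h2]

lemma IsDilation.coeFn_symm {c : ℝ} (hc : 0 < c) {U : L2R ≃ₗᵢ[ℂ] L2R} (hU : IsDilation c U)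
    (g : L2R) : ⇑(U.symm g) =ᵐ[volume] fun t => ((√c : ℝ) : ℂ) * g (c * t) := by
  filter_upwards [(quasiMeasurePreserving_const_mul hc.ne').ae_eq (hU (U.symm g))] with t ht
  simp only [Function.comp_apply, LinearIsometryEquiv.apply_symm_apply,
    mul_div_cancel_left₀ _ hc.ne'] at ht
  rw [ht, mul_inv_cancel_left₀ (by exact_mod_cast (Real.sqrt_pos.mpr hc).ne')]

lemma IsPlancherelTransform.apply_dilation {F U : L2R ≃ₗᵢ[ℂ] L2R} (hF : IsPlancherelTransform F)
    {c : ℝ} (hc : 0 < c) (hU : IsDilation c U) (f : L2R) : F (U f) = U.symm (F f) := by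
  suffices (fun f => F (U f)) = fun f => U.symm (F f) from congrFun this f
  refine Continuous.ext_on (Lp.dense_setOf_integrable (p := 2) ENNReal.ofNat_ne_top) (by fun_prop)
    (by fun_prop) ?_
  intro f (hf : Integrable f volume)
  have hUf : Integrable (U f) := ((hf.comp_div hc.ne').const_mul _).congr (hU f).symm
  have key (t : ℝ) : ∫ x : ℝ, exp (-(I * x * t)) * U f x =
      ((√c : ℝ) : ℂ) * ∫ x : ℝ, exp (-(I * x * (c * t : ℝ))) * f x := by
    have hsq : ((c : ℝ) : ℂ) = ((√c : ℝ) : ℂ) * ((√c : ℝ) : ℂ) := by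
      exact_mod_cast (Real.mul_self_sqrt hc.le).symm
    have hsqrt : ((√c : ℝ) : ℂ) ≠ 0 := by exact_mod_cast (Real.sqrt_pos.mpr hc).ne'
    calc ∫ x : ℝ, exp (-(I * x * t)) * U f x
        = ∫ x : ℝ, ((√c : ℝ) : ℂ)⁻¹ * (exp (-(I * x * t)) * f (x / c)) :=
          integral_congr_ae (by filter_upwards [hU f] with x hx; rw [hx]; ring)
      _ = _ := by
          rw [integral_const_mul, integral_exp_mul_comp_div _ hc.ne', abs_of_pos hc, hsq,
            mul_assoc, inv_mul_cancel_left₀ hsqrt]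
  apply Lp.ext
  filter_upwards [hF _ hUf, hU.coeFn_symm hc (F f),
    (quasiMeasurePreserving_const_mul hc.ne').ae_eq (hF f hf)] with t h1 h2 h3
  simp only [Function.comp_apply] at h3
  rw [h1, h2, h3, key]
  ring

lemma IsPlancherelTransform.apply_translation {F : L2R ≃ₗᵢ[ℂ] L2R}
    (hF : IsPlancherelTransform F) (a : ℝ) (f : L2R) :
    F (translation a f) = modulation a (F f) := by
  suffices (fun f => F (translation a f)) = fun f => modulation a (F f) from congrFun this f
  refine Continuous.ext_on (Lp.dense_setOf_integrable (p := 2) ENNReal.ofNat_ne_top)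
    (F.continuous.comp (translation a).continuous) ((modulation a).continuous.comp F.continuous)
    ?_
  intro f (hf : Integrable f volume)
  have hTf : Integrable (translation a f) :=
    (hf.comp_sub_right a).congr (coeFn_translation a f).symm
  apply Lp.ext
  filter_upwards [hF _ hTf, coeFn_modulation a (F f), hF f hf] with t h1 h2 h3
  rw [h1, h2, h3, integral_congr_ae ((coeFn_translation a f).mono fun x hx => by rw [hx]),
    integral_exp_mul_comp_sub]
  ring

lemma IsPlancherelTransform.coeFn_apply_translates {F : L2R ≃ₗᵢ[ℂ] L2R}
    (hF : IsPlancherelTransform F) {φ : ℝ → ℂ} {φL : ℤ → L2R}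
    (hφL : ∀ k : ℤ, ⇑(φL k) =ᵐ[volume] fun x => φ (x - k)) {φhat : ℝ → ℂ}
    (hφhat : ⇑(F (φL 0)) =ᵐ[volume] φhat) (n : ℤ) :
    ⇑(F (φL n)) =ᵐ[volume] fun t => exp (-(I * n * t)) * φhat t := by
  have htrans : translation n (φL 0) = φL n := by
    apply Lp.ext
    filter_upwards [coeFn_translation n (φL 0), hφL n,
      (measurePreserving_sub_right volume (n : ℝ)).quasiMeasurePreserving.ae_eq (hφL 0)]
      with x h1 h2 h3
    simp only [Function.comp_apply, Int.cast_zero, sub_zero] at h3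
    rw [h1, h2, h3]
  rw [← htrans, hF.apply_translation]
  filter_upwards [coeFn_modulation n (F (φL 0)), hφhat] with t h1 h2
  rw [h1, h2, Complex.ofReal_intCast]

lemma adjoint_comp_self_eq_one_of_orthonormal_translates {F : L2R ≃ₗᵢ[ℂ] L2R}
    (hF : IsPlancherelTransform F) {φ : ℝ → ℂ} {φL : ℤ → L2R}
    (hφL : ∀ k : ℤ, ⇑(φL k) =ᵐ[volume] fun x => φ (x - k)) (horth : Orthonormal ℂ φL)
    {φhat : ℝ → ℂ} (hφhat : ⇑(F (φL 0)) =ᵐ[volume] φhat) {Mφ : HT →L[ℂ] L2R}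
    (hMφ : ∀ ξ : HT, ⇑(Mφ ξ) =ᵐ[volume] fun t : ℝ => φhat t * ξ (t : Circle2π)) :
    ContinuousLinearMap.adjoint Mφ ∘L Mφ = 1 := by
  have hMφ_basis (n : ℤ) : Mφ (fourierBasis (T := 2 * π) n) = F (φL (-n)) := by
    apply Lp.ext
    filter_upwards [hMφ (fourierBasis n), AddCircle.fourierBasis_comp_coe_ae_eq (2 * π) n,
      hF.coeFn_apply_translates hφL hφhat (-n)] with t h1 h2 h3
    rw [h1, h2, h3]
    push_cast
    field_simp
  refine (fourierBasis (T := 2 * π)).adjoint_comp_self_eq_one ?_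
  rw [show ⇑Mφ ∘ fourierBasis = ⇑F ∘ φL ∘ Neg.neg from funext hMφ_basis]
  exact (horth.comp_linearIsometryEquiv F).comp _ neg_injective

theorem filter_isometry_is_compression_of_scaling_general
    -- the father function φ and its translates φ(· - k)
    (φ : ℝ → ℂ)
    (φL : ℤ → L2R) (hφL : ∀ k : ℤ, ⇑(φL k) =ᵐ[volume] fun x => φ (x - (k : ℝ)))
    -- the translates are orthonormal
    (horth : Orthonormal ℂ φL)
    -- the scaling unitary (Uξ)(x) = 2^{-1/2} ξ(x/2)
    (U : L2R ≃ₗᵢ[ℂ] L2R)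
    (hU : ∀ ξ : L2R, ⇑(U ξ) =ᵐ[volume] fun x => ((Real.sqrt 2 : ℂ))⁻¹ * ξ (x / 2))
    -- the Plancherel Fourier transform F, with the paper's normalization
    (F : L2R ≃ₗᵢ[ℂ] L2R)
    (hF : ∀ f : L2R, Integrable ⇑f volume →
      ⇑(F f) =ᵐ[volume] fun t : ℝ =>
        ((Real.sqrt (2 * Real.pi) : ℂ))⁻¹ * ∫ x : ℝ, Complex.exp (-(Complex.I * x * t)) * f x)
    -- φ̂ = F φ
    (φhat : ℝ → ℂ) (hφhat : ⇑(F (φL 0)) =ᵐ[volume] φhat)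
    -- the low-pass filter m₀ : √2 φ̂(2t) = m₀(e^{-it}) φ̂(t) a.e.
    (m0 : Circle2π → ℂ)
    (hm0 : ∀ᵐ t ∂(volume : Measure ℝ),
      (Real.sqrt 2 : ℂ) * φhat (2 * t) = m0 (t : Circle2π) * φhat t)
    -- the operator S₀ on L²(𝕋)
    (S0 : HT →L[ℂ] HT)
    (hS0 : ∀ ξ : HT, ⇑(S0 ξ) =ᵐ[haarT] fun z => m0 z * ξ (2 • z))
    -- the isometry M_φ̂ : L²(𝕋) → L²(ℝ), (M_φ̂ ξ)(t) = φ̂(t) ξ(e^{-it})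
    (Mφ : HT →L[ℂ] L2R)
    (hMφ : ∀ ξ : HT, ⇑(Mφ ξ) =ᵐ[volume] fun t : ℝ => φhat t * ξ (t : Circle2π)) :
    ∀ ξ : HT, S0 ξ = (ContinuousLinearMap.adjoint Mφ) (F (U (F.symm (Mφ ξ)))) := by
  have hMφ_isometry := adjoint_comp_self_eq_one_of_orthonormal_translates hF hφL horth hφhat hMφ
  have hcompress (ξ : HT) : U.symm (Mφ ξ) = Mφ (S0 ξ) := by
    apply Lp.ext
    filter_upwards [IsDilation.coeFn_symm two_pos hU (Mφ ξ),
      (quasiMeasurePreserving_const_mul two_ne_zero).ae_eq (hMφ ξ), hMφ (S0 ξ),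
      (AddCircle.quasiMeasurePreserving_coe _).ae_eq (hS0 ξ), hm0] with t h1 h2 h3 h4 h5
    simp only [Function.comp_apply] at h2 h4
    rw [h1, h2, h3, h4, ← AddCircle.coe_nsmul, nsmul_eq_mul, Nat.cast_ofNat, ← mul_assoc, h5]
    ring
  intro ξ
  rw [IsPlancherelTransform.apply_dilation hF two_pos hU, LinearIsometryEquiv.apply_symm_apply,
    hcompress, ← ContinuousLinearMap.comp_apply, hMφ_isometry, one_apply_eq_self]

/-- **Corollary 7.2.** For a scale-2 father function `φ` with low-pass filter `m₀`, the
isometry `(S₀ξ)(z) = m₀(z) ξ(z²)` on `L²(𝕋)` is the compression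
`S₀ = M_φ̂* F U F⁻¹ M_φ̂` of the scaling operator `(Uξ)(x) = 2^{-1/2} ξ(x/2)`. -/
theorem filter_isometry_is_compression_of_scaling
    -- the father function φ and its translates φ(· - k)
    (φ : ℝ → ℂ) (hφ_mem : MemLp φ 2 (volume : Measure ℝ))
    (φL : ℤ → L2R) (hφL : ∀ k : ℤ, ⇑(φL k) =ᵐ[volume] fun x => φ (x - (k : ℝ)))
    -- the translates are orthonormal
    (horth : Orthonormal ℂ φL)
    -- the scaling unitary (Uξ)(x) = 2^{-1/2} ξ(x/2)
    (U : L2R ≃ₗᵢ[ℂ] L2R)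
    (hU : ∀ ξ : L2R, ⇑(U ξ) =ᵐ[volume] fun x => ((Real.sqrt 2 : ℂ))⁻¹ * ξ (x / 2))
    -- multiresolution axioms: Uφ ∈ V₀, ⋂ₙ Uⁿ V₀ = {0}, ⋃ₙ Uⁿ V₀ dense
    (hrefine : U (φL 0) ∈ spanTranslates φL)
    (hsep : (⨅ n : ℤ, dilSubspace U (spanTranslates φL) n) = ⊥)
    (hdense : (⨆ n : ℤ, dilSubspace U (spanTranslates φL) n).topologicalClosure = ⊤)
    -- the Plancherel Fourier transform F, with the paper's normalization
    (F : L2R ≃ₗᵢ[ℂ] L2R)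
    (hF : ∀ f : L2R, Integrable ⇑f volume →
      ⇑(F f) =ᵐ[volume] fun t : ℝ =>
        ((Real.sqrt (2 * Real.pi) : ℂ))⁻¹ * ∫ x : ℝ, Complex.exp (-(Complex.I * x * t)) * f x)
    -- φ̂ = F φ
    (φhat : ℝ → ℂ) (hφhat : ⇑(F (φL 0)) =ᵐ[volume] φhat)
    -- the low-pass filter m₀ : √2 φ̂(2t) = m₀(e^{-it}) φ̂(t) a.e.
    (m0 : Circle2π → ℂ) (hm0_mem : MemLp m0 2 haarT)
    (hm0 : ∀ᵐ t ∂(volume : Measure ℝ),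
      (Real.sqrt 2 : ℂ) * φhat (2 * t) = m0 (t : Circle2π) * φhat t)
    -- the operator S₀ on L²(𝕋)
    (S0 : HT →L[ℂ] HT)
    (hS0 : ∀ ξ : HT, ⇑(S0 ξ) =ᵐ[haarT] fun z => m0 z * ξ (2 • z))
    -- the isometry M_φ̂ : L²(𝕋) → L²(ℝ), (M_φ̂ ξ)(t) = φ̂(t) ξ(e^{-it})
    (Mφ : HT →L[ℂ] L2R)
    (hMφ : ∀ ξ : HT, ⇑(Mφ ξ) =ᵐ[volume] fun t : ℝ => φhat t * ξ (t : Circle2π)) :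
    ∀ ξ : HT, S0 ξ = (ContinuousLinearMap.adjoint Mφ) (F (U (F.symm (Mφ ξ)))) :=
  filter_isometry_is_compression_of_scaling_general φ φL hφL horth U hU F hF φhat hφhat m0 hm0 S0
    hS0 Mφ hMφ
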